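/- Equivalence of stationary points under strong QI: let 𝒦 ⊆ ℝ^{mN×pN} be a linear subspace, strongly quadratically invariant with respect to G, with K·G nilpotent for every K ∈ 𝒦. Let K̄ ∈ 𝒦 and set Q̄ := (I − K̄·G)^{-1}·K̄. Then the directional derivative of J̃ at Q̄ vanishes along every direction in 𝒦 if and only if the directional derivative of J at K̄ vanishes along every direction in 𝒦; that is, ∇J̃(Q̄) ∈ 𝒦^⊥ if and only if ∇J(K̄) ∈ 𝒦^⊥. -/

import Mathlib

open Matrix

noncomputable section

section

open scoped ComplexOrder

/-- The positive semidefinite square root of a positive semidefinite matrix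
(removed from Mathlib; restored here with its old definition). -/
def Matrix.PosSemidef.sqrt {n 𝕜 : Type*} [Fintype n] [DecidableEq n] [RCLike 𝕜]
    {A : Matrix n n 𝕜} (hA : A.PosSemidef) : Matrix n n 𝕜 :=
  hA.1.eigenvectorUnitary.1 * diagonal ((↑) ∘ (√·) ∘ hA.1.eigenvalues) *
  (star hA.1.eigenvectorUnitary : Matrix n n 𝕜)

end

/-- Squared Frobenius norm of a real matrix. -/
def frobSq {a b : Type*} [Fintype a] [Fintype b] (A : Matrix a b ℝ) : ℝ :=
  ∑ i, ∑ j, (A i j) ^ 2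

/-- Squared Euclidean norm of a real vector. -/
def vecSq {a : Type*} [Fintype a] (v : a → ℝ) : ℝ :=
  ∑ i, (v i) ^ 2

/-- The finite-horizon LQG cost `J(K)` of the paper, written in terms of the
square roots `Msq = M^{1/2}`, `Swsq = Σw^{1/2}`, `Rsq = R^{1/2}`, `Svsq = Σv^{1/2}`. -/
def Jcost {nn mm pp : ℕ}
    (P11 : Matrix (Fin nn) (Fin nn) ℝ) (P12 : Matrix (Fin nn) (Fin mm) ℝ)
    (C : Matrix (Fin pp) (Fin nn) ℝ)
    (Msq Swsq : Matrix (Fin nn) (Fin nn) ℝ)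
    (Rsq : Matrix (Fin mm) (Fin mm) ℝ) (Svsq : Matrix (Fin pp) (Fin pp) ℝ)
    (μ : Fin nn → ℝ) (K : Matrix (Fin mm) (Fin pp) ℝ) : ℝ :=
  frobSq (Msq * (1 - P12 * K * C)⁻¹ * P11 * Swsq)
  + frobSq (Msq * P12 * K * (1 - C * P12 * K)⁻¹ * Svsq)
  + frobSq (Rsq * K * (1 - C * P12 * K)⁻¹ * C * P11 * Swsq)
  + frobSq (Rsq * K * (1 - C * P12 * K)⁻¹ * Svsq)
  + vecSq ((Msq * (1 - P12 * K * C)⁻¹ * P11).mulVec μ)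
  + vecSq ((Rsq * K * (1 - C * P12 * K)⁻¹ * C * P11).mulVec μ)

/-- The disturbance-feedback cost `J̃(Q)` of the paper, written in terms of the
square roots `Msq = M^{1/2}`, `Swsq = Σw^{1/2}`, `Rsq = R^{1/2}`, `Svsq = Σv^{1/2}`. -/
def Jtilde {nn mm pp : ℕ}
    (P11 : Matrix (Fin nn) (Fin nn) ℝ) (P12 : Matrix (Fin nn) (Fin mm) ℝ)
    (C : Matrix (Fin pp) (Fin nn) ℝ)
    (Msq Swsq : Matrix (Fin nn) (Fin nn) ℝ)
    (Rsq : Matrix (Fin mm) (Fin mm) ℝ) (Svsq : Matrix (Fin pp) (Fin pp) ℝ)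
    (μ : Fin nn → ℝ) (Q : Matrix (Fin mm) (Fin pp) ℝ) : ℝ :=
  frobSq (Msq * (1 + P12 * Q * C) * P11 * Swsq)
  + frobSq (Msq * P12 * Q * Svsq)
  + frobSq (Rsq * Q * C * P11 * Swsq)
  + frobSq (Rsq * Q * Svsq)
  + vecSq ((Rsq * Q * C * P11).mulVec μ)
  + vecSq ((Msq * (1 + P12 * Q * C) * P11).mulVec μ)

end

/-! With `h K := K (I - G K)⁻¹`, the cost satisfies `J = J̃ ∘ h` wherever `I - G K` is invertible,
and `h K̄ = Q̄` by the push-through identity. The derivative of `h` at `K̄` is the sandwich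
`D ↦ (I - K̄ G)⁻¹ D (I - G K̄)⁻¹`, so the derivative of `J` at `K̄` along `D` is that of `J̃` at `Q̄`
along the sandwiched direction. Strong QI makes `D ↦ (I - K̄ G) D (I - G K̄)` map `𝒦` into itself;
being injective on the finite-dimensional `𝒦`, it maps `𝒦` onto `𝒦`, hence so does its inverse,
and the two stationarity conditions are the same. -/

open Topology

namespace Matrix

variable {m p α : Type*} [Fintype m] [Fintype p] [DecidableEq m] [DecidableEq p] [CommRing α]

theorem inv_one_sub_mul (X : Matrix m p α) (Y : Matrix p m α) (h : IsUnit (1 - Y * X).det) :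
    (1 - X * Y)⁻¹ = 1 + X * (1 - Y * X)⁻¹ * Y := by
  refine inv_eq_right_inv ?_
  have hX : X * ((1 - Y * X) * (1 - Y * X)⁻¹) * Y = X * Y := by
    rw [mul_nonsing_inv _ h, Matrix.mul_one]
  simp only [Matrix.sub_mul, Matrix.mul_sub, Matrix.mul_add, Matrix.one_mul, Matrix.mul_one,
    Matrix.mul_assoc] at hX ⊢
  rw [← hX]
  abel

theorem inv_one_sub_mul_mul (X : Matrix m p α) (Y : Matrix p m α) (h : IsUnit (1 - Y * X).det) :
    (1 - X * Y)⁻¹ * X = X * (1 - Y * X)⁻¹ := by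
  have hX : X * (1 - Y * X)⁻¹ * (1 - Y * X) = X := by
    rw [Matrix.mul_assoc, nonsing_inv_mul _ h, Matrix.mul_one]
  rw [inv_one_sub_mul X Y h]
  conv_lhs => rw [Matrix.add_mul, Matrix.one_mul]; enter [1]; rw [← hX]
  simp only [Matrix.mul_sub, Matrix.mul_one, Matrix.mul_assoc]
  abel

end Matrix

def IsStronglyQI {m p 𝕜 : Type*} [Fintype m] [Fintype p] [CommRing 𝕜]
    (𝒦 : Submodule 𝕜 (Matrix m p 𝕜)) (G : Matrix p m 𝕜) : Prop :=
  ∀ K₁ ∈ 𝒦, ∀ K₂ ∈ 𝒦, K₁ * G * K₂ ∈ 𝒦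

namespace IsStronglyQI

variable {m p 𝕜 : Type*} [Fintype m] [Fintype p] [DecidableEq m] [DecidableEq p] [Field 𝕜]
  {𝒦 : Submodule 𝕜 (Matrix m p 𝕜)} {G : Matrix p m 𝕜} {K : Matrix m p 𝕜}

theorem one_sub_mul_mul_mem (h𝒦 : IsStronglyQI 𝒦 G) (hK : K ∈ 𝒦) {Z : Matrix m p 𝕜}
    (hZ : Z ∈ 𝒦) : (1 - K * G) * Z * (1 - G * K) ∈ 𝒦 := by
  have hW : Z - K * G * Z ∈ 𝒦 := sub_mem hZ (h𝒦 K hK Z hZ)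
  have e : (1 - K * G) * Z * (1 - G * K) = (Z - K * G * Z) - (Z - K * G * Z) * G * K := by
    simp only [Matrix.sub_mul, Matrix.mul_sub, Matrix.one_mul, Matrix.mul_one, Matrix.mul_assoc]
  rw [e]
  exact sub_mem hW (h𝒦 _ hW K hK)

/-- On the finite-dimensional space `𝒦`, the injective map `Z ↦ (1 - KG) Z (1 - GK)` is onto,
so its inverse also maps `𝒦` onto `𝒦`. -/
theorem bijOn_inv_mul_mul (h𝒦 : IsStronglyQI 𝒦 G) (hK : K ∈ 𝒦) (hu : IsUnit (1 - G * K).det) :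
    Set.BijOn (fun Z : Matrix m p 𝕜 => (1 - K * G)⁻¹ * Z * (1 - G * K)⁻¹) 𝒦 𝒦 := by
  have hu' : IsUnit (1 - K * G).det := by rwa [det_one_sub_mul_comm]
  let T := (mulRightLinearMap m 𝕜 (1 - G * K)).comp (mulLeftLinearMap p 𝕜 (1 - K * G))
  have hmaps : ∀ Z ∈ 𝒦, T Z ∈ 𝒦 := fun Z hZ => h𝒦.one_sub_mul_mul_mem hK hZ
  have hleft : ∀ Z, (1 - K * G)⁻¹ * T Z * (1 - G * K)⁻¹ = Z := fun Z => by
    simp only [T, LinearMap.comp_apply, mulLeftLinearMap_apply, mulRightLinearMap_apply]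
    rw [Matrix.mul_assoc _ Z, nonsing_inv_mul_cancel_left _ _ hu',
      mul_nonsing_inv_cancel_right _ _ hu]
  have hright : ∀ Z, T ((1 - K * G)⁻¹ * Z * (1 - G * K)⁻¹) = Z := fun Z => by
    simp only [T, LinearMap.comp_apply, mulLeftLinearMap_apply, mulRightLinearMap_apply]
    rw [Matrix.mul_assoc _ Z, mul_nonsing_inv_cancel_left _ _ hu',
      nonsing_inv_mul_cancel_right _ _ hu]
  have hinj : Set.InjOn T 𝒦 := fun Z _ W _ h => by rw [← hleft Z, ← hleft W, h]
  exact Set.BijOn.symm (f := T) ⟨fun Z _ => hright Z, fun Z _ => hleft Z⟩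
    ⟨hmaps, hinj, (LinearMap.injOn_iff_surjOn hmaps).1 hinj⟩

end IsStronglyQI

theorem Matrix.eventually_isUnit_det_one_sub_mul_add_smul {m p : Type*} [Fintype m] [Fintype p]
    [DecidableEq p] (G : Matrix p m ℝ) (K D : Matrix m p ℝ) (h : IsUnit (1 - G * K).det) :
    ∀ᶠ t : ℝ in 𝓝 0, IsUnit (1 - G * (K + t • D)).det := by
  have hc : Continuous fun t : ℝ => (1 - G * (K + t • D)).det := by fun_prop
  filter_upwards [hc.continuousAt.eventually_ne (by simpa using h.ne_zero)] with t ht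
  exact isUnit_iff_ne_zero.2 ht

theorem lineDeriv_eq_lineDeriv_of_eventuallyEq_comp {𝕜 E F : Type*} [NontriviallyNormedField 𝕜]
    [AddCommGroup E] [Module 𝕜 E] [NormedAddCommGroup F] [NormedSpace 𝕜 F]
    {f : E → 𝕜} {g : F → 𝕜} {γ : 𝕜 → F} {x v : E} {w : F}
    (hg : DifferentiableAt 𝕜 g (γ 0)) (hγ : HasDerivAt γ w 0)
    (hfg : (fun t => f (x + t • v)) =ᶠ[𝓝 0] fun t => g (γ t)) :
    lineDeriv 𝕜 f x v = lineDeriv 𝕜 g (γ 0) w := by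
  rw [hg.lineDeriv_eq_fderiv, lineDeriv, hfg.deriv_eq]
  exact (hg.hasFDerivAt.comp_hasDerivAt 0 hγ).deriv

section Analysis

-- A normed-ring structure on square matrices is needed to differentiate inversion; the statements
-- below only see its topology, which is the product topology.
attribute [local instance] Matrix.linftyOpNormedAddCommGroup Matrix.linftyOpNormedSpace
  Matrix.linftyOpNormedRing Matrix.linftyOpNormedAlgebra

variable {l m n : Type*} [Fintype l] [Fintype m] [Fintype n]
  {E : Type*} [NormedAddCommGroup E] [NormedSpace ℝ E]

theorem HasDerivAt.matrix_mul {u : ℝ → Matrix l m ℝ} {v : ℝ → Matrix m n ℝ}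
    {u' : Matrix l m ℝ} {v' : Matrix m n ℝ} {x : ℝ}
    (hu : HasDerivAt u u' x) (hv : HasDerivAt v v' x) :
    HasDerivAt (fun t => u t * v t) (u x * v' + u' * v x) x :=
  let B := (mulLinearMap (l := l) (m := m) (n := n) (A := ℝ) ℝ).toContinuousBilinearMap
  B.hasDerivAt_of_bilinear (fun _ => hu) (fun _ => hv)

theorem HasDerivAt.matrix_inv [DecidableEq m] {f : ℝ → Matrix m m ℝ} {f' : Matrix m m ℝ} {x : ℝ}
    (hf : HasDerivAt f f' x) (hx : IsUnit (f x).det) :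
    HasDerivAt (fun t => (f t)⁻¹) (-((f x)⁻¹ * f' * (f x)⁻¹)) x := by
  have hu : IsUnit (f x) := (isUnit_iff_isUnit_det _).2 hx
  have := (hu.unit_spec ▸ hasFDerivAt_ringInverse (𝕜 := ℝ) hu.unit).comp_hasDerivAt x hf
  have hinv : ((hu.unit⁻¹ : (Matrix m m ℝ)ˣ) : Matrix m m ℝ) = (f x)⁻¹ := by
    rw [coe_units_inv, hu.unit_spec]
  rw [hinv] at this
  simp only [Function.comp_def, ← nonsing_inv_eq_ringInverse, _root_.neg_apply,
    ContinuousLinearMap.mulLeftRight_apply] at this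
  exact this

@[fun_prop]
theorem Differentiable.frobSq {f : E → Matrix m n ℝ} (hf : Differentiable ℝ f) :
    Differentiable ℝ fun x => frobSq (f x) := by
  unfold _root_.frobSq
  have hentry (i : m) (j : n) : Differentiable ℝ fun A : Matrix m n ℝ => A i j :=
    (entryLinearMap ℝ ℝ i j).toContinuousLinearMap.differentiable
  fun_prop

@[fun_prop]
theorem Differentiable.vecSq {f : E → m → ℝ} (hf : Differentiable ℝ f) :
    Differentiable ℝ fun x => vecSq (f x) := by
  unfold _root_.vecSq
  fun_prop

@[fun_prop]
theorem Differentiable.const_matrix_mul {f : E → Matrix m n ℝ} (hf : Differentiable ℝ f)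
    (A : Matrix l m ℝ) : Differentiable ℝ fun x => A * f x :=
  (mulLeftLinearMap n ℝ A).toContinuousLinearMap.differentiable.comp hf

@[fun_prop]
theorem Differentiable.matrix_mul_const {f : E → Matrix l m ℝ} (hf : Differentiable ℝ f)
    (B : Matrix m n ℝ) : Differentiable ℝ fun x => f x * B :=
  (mulRightLinearMap l ℝ B).toContinuousLinearMap.differentiable.comp hf

@[fun_prop]
theorem Differentiable.matrix_mulVec_const {f : E → Matrix m n ℝ} (hf : Differentiable ℝ f)
    (v : n → ℝ) : Differentiable ℝ fun x => f x *ᵥ v :=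
  ((mulVecBilin (m := m) (A := ℝ) ℝ ℝ).flip v).toContinuousLinearMap.differentiable.comp hf

theorem hasDerivAt_mul_inv_one_sub_mul [DecidableEq m] [DecidableEq n] (G : Matrix n m ℝ)
    (K D : Matrix m n ℝ) (hu : IsUnit (1 - G * K).det) :
    HasDerivAt (fun t : ℝ => (K + t • D) * (1 - G * (K + t • D))⁻¹)
      ((1 - K * G)⁻¹ * D * (1 - G * K)⁻¹) 0 := by
  have hline : HasDerivAt (fun t : ℝ => K + t • D) D 0 :=
    (((hasDerivAt_id (0 : ℝ)).smul_const D).const_add K).congr_deriv (one_smul ℝ D)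
  have hden : HasDerivAt (fun t : ℝ => 1 - G * (K + t • D)) (-(G * D)) 0 :=
    (((hasDerivAt_const (0 : ℝ) G).matrix_mul hline).const_sub 1).congr_deriv (by simp)
  refine (hline.matrix_mul (hden.matrix_inv (by simpa using hu))).congr_deriv ?_
  rw [inv_one_sub_mul K G hu]
  simp only [zero_smul, add_zero, neg_mul, mul_neg, neg_neg, Matrix.add_mul, Matrix.one_mul,
    Matrix.mul_assoc]
  abel

variable {nn mm pp : ℕ} (P11 : Matrix (Fin nn) (Fin nn) ℝ) (P12 : Matrix (Fin nn) (Fin mm) ℝ)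
  (C : Matrix (Fin pp) (Fin nn) ℝ) (Msq Swsq : Matrix (Fin nn) (Fin nn) ℝ)
  (Rsq : Matrix (Fin mm) (Fin mm) ℝ) (Svsq : Matrix (Fin pp) (Fin pp) ℝ) (μ : Fin nn → ℝ)

theorem Jcost_eq_Jtilde {K : Matrix (Fin mm) (Fin pp) ℝ} (h : IsUnit (1 - C * P12 * K).det) :
    Jcost P11 P12 C Msq Swsq Rsq Svsq μ K =
      Jtilde P11 P12 C Msq Swsq Rsq Svsq μ (K * (1 - C * P12 * K)⁻¹) := by
  have hinv : (1 - P12 * K * C)⁻¹ = 1 + P12 * (K * (1 - C * P12 * K)⁻¹) * C := by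
    rw [inv_one_sub_mul (P12 * K) C (by rwa [← Matrix.mul_assoc])]
    simp only [Matrix.mul_assoc]
  unfold Jcost Jtilde
  rw [hinv]
  simp only [Matrix.mul_assoc]
  ring

theorem differentiable_Jtilde : Differentiable ℝ (Jtilde P11 P12 C Msq Swsq Rsq Svsq μ) := by
  unfold Jtilde
  fun_prop

theorem lineDeriv_Jcost_eq {K : Matrix (Fin mm) (Fin pp) ℝ} (hK : IsUnit (1 - C * P12 * K).det)
    (D : Matrix (Fin mm) (Fin pp) ℝ) :
    lineDeriv ℝ (Jcost P11 P12 C Msq Swsq Rsq Svsq μ) K D =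
      lineDeriv ℝ (Jtilde P11 P12 C Msq Swsq Rsq Svsq μ) (K * (1 - C * P12 * K)⁻¹)
        ((1 - K * (C * P12))⁻¹ * D * (1 - C * P12 * K)⁻¹) := by
  have hcomp := lineDeriv_eq_lineDeriv_of_eventuallyEq_comp
    (f := Jcost P11 P12 C Msq Swsq Rsq Svsq μ) (x := K) (v := D)
    (differentiable_Jtilde P11 P12 C Msq Swsq Rsq Svsq μ _)
    (hasDerivAt_mul_inv_one_sub_mul (C * P12) K D hK) ?_
  · simpa using hcomp
  filter_upwards [eventually_isUnit_det_one_sub_mul_add_smul (C * P12) K D hK] with t ht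
  exact Jcost_eq_Jtilde P11 P12 C Msq Swsq Rsq Svsq μ ht

end Analysis

theorem stationary_points_equivalence_general {n m p N : ℕ}
    (P11 : Matrix (Fin (n * (N + 1))) (Fin (n * (N + 1))) ℝ)
    (P12 : Matrix (Fin (n * (N + 1))) (Fin (m * N)) ℝ)
    (C : Matrix (Fin (p * N)) (Fin (n * (N + 1))) ℝ)
    {M W : Matrix (Fin (n * (N + 1))) (Fin (n * (N + 1))) ℝ}
    {R : Matrix (Fin (m * N)) (Fin (m * N)) ℝ}
    {V : Matrix (Fin (p * N)) (Fin (p * N)) ℝ}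
    (hM : M.PosSemidef) (hW : W.PosSemidef) (hR : R.PosDef) (hV : V.PosDef)
    (μ : Fin (n * (N + 1)) → ℝ)
    (G : Matrix (Fin (p * N)) (Fin (m * N)) ℝ) (hG : G = C * P12)
    (𝒦 : Submodule ℝ (Matrix (Fin (m * N)) (Fin (p * N)) ℝ))
    (hSQI : ∀ K₁ ∈ 𝒦, ∀ K₂ ∈ 𝒦, K₁ * G * K₂ ∈ 𝒦)
    (hnilp : ∀ K ∈ 𝒦, IsNilpotent (K * G))
    (Kbar : Matrix (Fin (m * N)) (Fin (p * N)) ℝ) (hKbar : Kbar ∈ 𝒦)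
    (Qbar : Matrix (Fin (m * N)) (Fin (p * N)) ℝ) (hQbar : Qbar = (1 - Kbar * G)⁻¹ * Kbar) :
    (∀ D ∈ 𝒦, deriv (fun t : ℝ =>
        Jtilde P11 P12 C hM.sqrt hW.sqrt hR.posSemidef.sqrt hV.posSemidef.sqrt μ
          (Qbar + t • D)) 0 = 0) ↔
    (∀ D ∈ 𝒦, deriv (fun t : ℝ =>
        Jcost P11 P12 C hM.sqrt hW.sqrt hR.posSemidef.sqrt hV.posSemidef.sqrt μ
          (Kbar + t • D)) 0 = 0) := by
  subst hG hQbar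
  have hu : IsUnit (1 - C * P12 * Kbar).det := by
    rw [det_one_sub_mul_comm]
    exact (isUnit_iff_isUnit_det _).1 (hnilp Kbar hKbar).isUnit_one_sub
  rw [inv_one_sub_mul_mul Kbar _ hu]
  refine (IsStronglyQI.bijOn_inv_mul_mul hSQI hKbar hu).forall.trans (forall₂_congr fun D _ => ?_)
  exact iff_of_eq (congrArg (· = 0) (lineDeriv_Jcost_eq _ _ _ _ _ _ _ _ hu D).symm)

/-- Equivalence of stationary points under strong QI: let `𝒦` be a strongly
quadratically invariant subspace with `K·G` nilpotent on `𝒦` (`G = C·P12`), let `Kbar ∈ 𝒦`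
and `Qbar := (I − Kbar·G)⁻¹·Kbar`. Then the directional derivative of `J̃` at `Qbar` vanishes
along every direction in `𝒦` iff the directional derivative of `J` at `Kbar` vanishes along
every direction in `𝒦`, i.e. `∇J̃(Qbar) ∈ 𝒦^⊥ ↔ ∇J(Kbar) ∈ 𝒦^⊥`. -/
theorem stationary_points_equivalence {n m p N : ℕ}
    (hn : 0 < n) (hm : 0 < m) (hp : 0 < p) (hN : 0 < N)
    (P11 : Matrix (Fin (n * (N + 1))) (Fin (n * (N + 1))) ℝ)
    (P12 : Matrix (Fin (n * (N + 1))) (Fin (m * N)) ℝ)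
    (C : Matrix (Fin (p * N)) (Fin (n * (N + 1))) ℝ)
    {M W : Matrix (Fin (n * (N + 1))) (Fin (n * (N + 1))) ℝ}
    {R : Matrix (Fin (m * N)) (Fin (m * N)) ℝ}
    {V : Matrix (Fin (p * N)) (Fin (p * N)) ℝ}
    (hM : M.PosSemidef) (hW : W.PosSemidef) (hR : R.PosDef) (hV : V.PosDef)
    (μ : Fin (n * (N + 1)) → ℝ)
    (G : Matrix (Fin (p * N)) (Fin (m * N)) ℝ) (hG : G = C * P12)
    (𝒦 : Submodule ℝ (Matrix (Fin (m * N)) (Fin (p * N)) ℝ))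
    (hSQI : ∀ K₁ ∈ 𝒦, ∀ K₂ ∈ 𝒦, K₁ * G * K₂ ∈ 𝒦)
    (hnilp : ∀ K ∈ 𝒦, IsNilpotent (K * G))
    (Kbar : Matrix (Fin (m * N)) (Fin (p * N)) ℝ) (hKbar : Kbar ∈ 𝒦)
    (Qbar : Matrix (Fin (m * N)) (Fin (p * N)) ℝ) (hQbar : Qbar = (1 - Kbar * G)⁻¹ * Kbar) :
    (∀ D ∈ 𝒦, deriv (fun t : ℝ =>
        Jtilde P11 P12 C hM.sqrt hW.sqrt hR.posSemidef.sqrt hV.posSemidef.sqrt μ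
          (Qbar + t • D)) 0 = 0) ↔
    (∀ D ∈ 𝒦, deriv (fun t : ℝ =>
        Jcost P11 P12 C hM.sqrt hW.sqrt hR.posSemidef.sqrt hV.posSemidef.sqrt μ
          (Kbar + t • D)) 0 = 0) :=
  stationary_points_equivalence_general P11 P12 C hM hW hR hV μ G hG 𝒦 hSQI hnilp Kbar hKbar Qbar
    hQbar
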